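/- Let a, b ∈ R^m, λ ≥ 0 with |a^T b| > λ||b||_2 and define x_ls = (a^T b)/||a||_2² and δ = (λ²/||a||_2²) · (||a||_2²||b||_2² - (a^T b)²) / (||a||_2²(||a||_2² - λ²)). Then 0 ≤ δ < x_ls², so that x_ls ± √δ has the same sign as x_ls. -/

import Mathlib

/-!
Cauchy–Schwarz gives `λ‖b‖ < |aᵀb| ≤ ‖a‖‖b‖`, so `λ < ‖a‖`: every factor of `δ` is nonnegative and its
denominator is positive. After clearing denominators, `δ < x_ls²` reduces to `λ²‖b‖² < (aᵀb)²`, which is the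
hypothesis squared. Hence `√δ < |x_ls|`, and a perturbation smaller than `|x_ls|` cannot change the sign.
-/

noncomputable def norm2 {m : ℕ} (v : Fin m → ℝ) : ℝ := Real.sqrt (∑ k, v k ^ 2)
noncomputable def dot {m : ℕ} (u v : Fin m → ℝ) : ℝ := ∑ k, u k * v k

theorem Real.sign_add_eq_of_abs_lt {x y : ℝ} (h : |y| < |x|) : Real.sign (x + y) = Real.sign x := by
  rcases lt_trichotomy x 0 with hx | rfl | hx
  · rw [abs_of_neg hx] at h
    rw [Real.sign_of_neg hx, Real.sign_of_neg (by linarith [le_abs_self y])]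
  · exact absurd h (by simp)
  · rw [abs_of_pos hx] at h
    rw [Real.sign_of_pos hx, Real.sign_of_pos (by linarith [neg_abs_le y])]

theorem norm2_nonneg {m : ℕ} (v : Fin m → ℝ) : 0 ≤ norm2 v := Real.sqrt_nonneg _

theorem norm2_sq {m : ℕ} (v : Fin m → ℝ) : norm2 v ^ 2 = ∑ k, v k ^ 2 :=
  Real.sq_sqrt (Finset.sum_nonneg fun _ _ => sq_nonneg _)

theorem abs_dot_le {m : ℕ} (a b : Fin m → ℝ) : |dot a b| ≤ norm2 a * norm2 b := by
  refine abs_le.2 (abs_le_of_sq_le_sq' ?_ (mul_nonneg (norm2_nonneg a) (norm2_nonneg b)))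
  rw [mul_pow, norm2_sq, norm2_sq]
  exact Finset.sum_mul_sq_le_sq_mul_sq _ _ _

section
variable {lam p q c : ℝ}

theorem delta_nonneg (hlam : 0 ≤ lam) (hp : lam < p) (hcs : |c| ≤ p * q) :
    0 ≤ lam ^ 2 / p ^ 2 * ((p ^ 2 * q ^ 2 - c ^ 2) / (p ^ 2 * (p ^ 2 - lam ^ 2))) := by
  have hc : c ^ 2 ≤ p ^ 2 * q ^ 2 := by
    rw [← mul_pow, ← sq_abs]
    exact pow_le_pow_left₀ (abs_nonneg c) hcs 2
  have hlp : lam ^ 2 < p ^ 2 := pow_lt_pow_left₀ hp hlam two_ne_zero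
  have hnum : 0 ≤ p ^ 2 * q ^ 2 - c ^ 2 := by linarith
  have hgap : 0 < p ^ 2 - lam ^ 2 := by linarith
  positivity

theorem delta_lt_sq (hlam : 0 ≤ lam) (hp : lam < p) (hq : 0 ≤ q) (h : lam * q < |c|) :
    lam ^ 2 / p ^ 2 * ((p ^ 2 * q ^ 2 - c ^ 2) / (p ^ 2 * (p ^ 2 - lam ^ 2))) < (c / p ^ 2) ^ 2 := by
  have hp0 : 0 < p := hlam.trans_lt hp
  have hgap : 0 < p ^ 2 - lam ^ 2 := by nlinarith
  have hc : lam ^ 2 * q ^ 2 < c ^ 2 := by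
    rw [← mul_pow, ← sq_abs c]
    exact pow_lt_pow_left₀ h (by positivity) two_ne_zero
  rw [div_mul_div_comm, div_pow, div_lt_div_iff₀ (by positivity) (by positivity)]
  -- the difference of the two sides is `p² (lam² q² - c²)`
  have key : lam ^ 2 * (p ^ 2 * q ^ 2 - c ^ 2) < c ^ 2 * (p ^ 2 - lam ^ 2) := by nlinarith
  nlinarith [mul_lt_mul_of_pos_right key (by positivity : (0 : ℝ) < (p ^ 2) ^ 2)]

end

theorem delta_bounds_and_sign_general {m : ℕ} (a b : Fin m → ℝ)
    (lam : ℝ) (hlam : 0 ≤ lam)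
    (h : |dot a b| > lam * norm2 b)
    (xls δ : ℝ)
    (hxls : xls = dot a b / norm2 a ^ 2)
    (hδ : δ = (lam ^ 2 / norm2 a ^ 2) *
        ((norm2 a ^ 2 * norm2 b ^ 2 - (dot a b) ^ 2) /
          (norm2 a ^ 2 * (norm2 a ^ 2 - lam ^ 2)))) :
    0 ≤ δ ∧ δ < xls ^ 2 ∧
      Real.sign (xls + Real.sqrt δ) = Real.sign xls ∧
      Real.sign (xls - Real.sqrt δ) = Real.sign xls := by
  have hcs := abs_dot_le a b
  have hp : lam < norm2 a := lt_of_mul_lt_mul_right (h.trans_le hcs) (norm2_nonneg b)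
  have hδ0 : 0 ≤ δ := hδ ▸ delta_nonneg hlam hp hcs
  have hδx : δ < xls ^ 2 := hδ ▸ hxls ▸ delta_lt_sq hlam hp (norm2_nonneg b) h
  have hroot : |Real.sqrt δ| < |xls| := by
    rw [abs_of_nonneg (Real.sqrt_nonneg δ), ← Real.sqrt_sq_eq_abs]
    exact Real.sqrt_lt_sqrt hδ0 hδx
  refine ⟨hδ0, hδx, Real.sign_add_eq_of_abs_lt hroot, ?_⟩
  rw [sub_eq_add_neg]
  exact Real.sign_add_eq_of_abs_lt (by rwa [abs_neg])

theorem delta_bounds_and_sign {m : ℕ} (a b : Fin m → ℝ)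
    (ha : a ≠ 0) (hb : b ≠ 0) (lam : ℝ) (hlam : 0 ≤ lam)
    (h : |dot a b| > lam * norm2 b)
    (xls δ : ℝ)
    (hxls : xls = dot a b / norm2 a ^ 2)
    (hδ : δ = (lam ^ 2 / norm2 a ^ 2) *
        ((norm2 a ^ 2 * norm2 b ^ 2 - (dot a b) ^ 2) /
          (norm2 a ^ 2 * (norm2 a ^ 2 - lam ^ 2)))) :
    0 ≤ δ ∧ δ < xls ^ 2 ∧
      Real.sign (xls + Real.sqrt δ) = Real.sign xls ∧
      Real.sign (xls - Real.sqrt δ) = Real.sign xls :=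
  delta_bounds_and_sign_general a b lam hlam h xls δ hxls hδ
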